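/- arXiv:2012.02057 — 3 statements merged into one kernel-verified Lean document; each statement's English description precedes it below -/
import Mathlib

section
/- For nonnegative reals a, b, c, d with c, d > 0 and ℓ ≥ k ≥ 1 integers: a^ℓ/c^{k-1} + b^ℓ/d^{k-1} ≥ 2^{k-ℓ} · (a+b)^ℓ / (c+d)^{k-1}. -/
/-! Put `p = ℓ / k`, so that `a ^ ℓ = (a ^ p) ^ k`. Radon's inequality (Jensen's inequality for
`t ↦ t ^ k` with weights proportional to `c, d`) bounds the left-hand side below by
`(a ^ p + b ^ p) ^ k / (c + d) ^ (k - 1)`, and convexity of `z ↦ z ^ p` gives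
`(a + b) ^ p ≤ 2 ^ (p - 1) * (a ^ p + b ^ p)`, whose `k`-th power is the remaining factor
`2 ^ (ℓ - k)`. -/

open Finset Real

theorem Finset.pow_sum_div_pow_sum_le_sum_pow_div {ι : Type*} (s : Finset ι) {x c : ι → ℝ}
    (hx : ∀ i ∈ s, 0 ≤ x i) (hc : ∀ i ∈ s, 0 < c i) (n : ℕ) :
    (∑ i ∈ s, x i) ^ (n + 1) / (∑ i ∈ s, c i) ^ n ≤ ∑ i ∈ s, x i ^ (n + 1) / c i ^ n := by
  rcases s.eq_empty_or_nonempty with rfl | hs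
  · simp
  set C := ∑ i ∈ s, c i
  have hC : 0 < C := sum_pos hc hs
  have jensen := pow_arith_mean_le_arith_mean_pow s (fun i ↦ c i / C) (fun i ↦ x i / c i)
    (fun i hi ↦ (div_pos (hc i hi) hC).le) (by rw [← sum_div, div_self hC.ne'])
    (fun i hi ↦ div_nonneg (hx i hi) (hc i hi).le) (n + 1)
  have mean : ∑ i ∈ s, c i / C * (x i / c i) = (∑ i ∈ s, x i) / C := by
    rw [sum_div]
    exact sum_congr rfl fun i hi ↦ by field_simp [(hc i hi).ne']
  have powers :
      ∑ i ∈ s, c i / C * (x i / c i) ^ (n + 1) = (∑ i ∈ s, x i ^ (n + 1) / c i ^ n) / C := by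
    rw [sum_div]
    refine sum_congr rfl fun i hi ↦ ?_
    rw [div_pow, pow_succ (c i)]
    field_simp [(hc i hi).ne']
  rwa [mean, powers, div_pow, pow_succ C, ← div_div, div_le_div_iff_of_pos_right hC] at jensen

theorem Real.rpow_add_le_mul_rpow_add_rpow {a b : ℝ} (ha : 0 ≤ a) (hb : 0 ≤ b) {p : ℝ}
    (hp : 1 ≤ p) : (a + b) ^ p ≤ 2 ^ (p - 1) * (a ^ p + b ^ p) := by
  lift a to NNReal using ha
  lift b to NNReal using hb
  exact_mod_cast NNReal.rpow_add_le_mul_rpow_add_rpow a b hp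

theorem two_zpow_sub_mul_add_pow_le {a b : ℝ} (ha : 0 ≤ a) (hb : 0 ≤ b) {k ℓ : ℕ} (hk : 0 < k)
    (hkl : k ≤ ℓ) :
    (2 : ℝ) ^ ((k : ℤ) - ℓ) * (a + b) ^ ℓ ≤ (a ^ ((ℓ : ℝ) / k) + b ^ ((ℓ : ℝ) / k)) ^ k := by
  set p : ℝ := ℓ / k
  have hk' : (0 : ℝ) < k := by exact_mod_cast hk
  have hp : 1 ≤ p := (one_le_div hk').2 (by exact_mod_cast hkl)
  have hpk : p * k = ℓ := div_mul_cancel₀ _ hk'.ne'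
  have two_pow_cancel : (2 : ℝ) ^ ((k : ℤ) - ℓ) * (2 ^ (p - 1)) ^ k = 1 := by
    rw [← rpow_mul_natCast zero_le_two, ← rpow_intCast, ← rpow_add zero_lt_two]
    push_cast
    rw [sub_mul, hpk]
    simp
  calc (2 : ℝ) ^ ((k : ℤ) - ℓ) * (a + b) ^ ℓ
      = 2 ^ ((k : ℤ) - ℓ) * ((a + b) ^ p) ^ k := by
        rw [← rpow_mul_natCast (add_nonneg ha hb), hpk, rpow_natCast]
    _ ≤ 2 ^ ((k : ℤ) - ℓ) * (2 ^ (p - 1) * (a ^ p + b ^ p)) ^ k := by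
        gcongr
        exact rpow_add_le_mul_rpow_add_rpow ha hb hp
    _ = (a ^ p + b ^ p) ^ k := by rw [mul_pow, ← mul_assoc, two_pow_cancel, one_mul]

/-- For nonnegative reals `a, b`, positive reals `c, d`, and integers `ℓ ≥ k ≥ 1`,
`a^ℓ/c^(k-1) + b^ℓ/d^(k-1) ≥ 2^(k-ℓ) · (a+b)^ℓ / (c+d)^(k-1)`. -/
theorem holder_convexity_core (a b c d : ℝ) (ha : 0 ≤ a) (hb : 0 ≤ b)
    (hc : 0 < c) (hd : 0 < d) (k ℓ : ℕ) (hk : 1 ≤ k) (hkl : k ≤ ℓ) :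
    (2 : ℝ) ^ ((k : ℤ) - ℓ) * (a + b) ^ ℓ / (c + d) ^ (k - 1) ≤
      a ^ ℓ / c ^ (k - 1) + b ^ ℓ / d ^ (k - 1) := by
  set p : ℝ := ℓ / k
  have hpow : ∀ x : ℝ, 0 ≤ x → (x ^ p) ^ k = x ^ ℓ := fun x hx ↦ by
    rw [← rpow_mul_natCast hx, div_mul_cancel₀ _ (by positivity), rpow_natCast]
  obtain ⟨m, rfl⟩ : ∃ m, k = m + 1 := ⟨k - 1, by omega⟩
  have radon := pow_sum_div_pow_sum_le_sum_pow_div univ (x := ![a ^ p, b ^ p]) (c := ![c, d])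
    (by simp [Fin.forall_fin_two, ha, hb, rpow_nonneg]) (by simp [Fin.forall_fin_two, hc, hd]) m
  simp only [Fin.sum_univ_two, Matrix.cons_val_zero, Matrix.cons_val_one] at radon
  rw [Nat.add_sub_cancel, ← hpow a ha, ← hpow b hb]
  calc (2 : ℝ) ^ ((↑(m + 1) : ℤ) - ℓ) * (a + b) ^ ℓ / (c + d) ^ m
      ≤ (a ^ p + b ^ p) ^ (m + 1) / (c + d) ^ m := by
        gcongr
        exact two_zpow_sub_mul_add_pow_le ha hb m.succ_pos hkl
    _ ≤ (a ^ p) ^ (m + 1) / c ^ m + (b ^ p) ^ (m + 1) / d ^ m := radon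
end

section
/- Let c be a real number with 0 ≤ c ≤ (3-√5)/4. For every graphon W, m_D(W) - 1/16 ≥ c·(m_{C_4}(W) - 1/8), where D = K_{1,1,2} is the diamond graph (4-cycle plus a diagonal). -/
/-!
Write `W = (1 + U) / 2`, so that `U = 2W - 1` is a symmetric kernel with values in `[-1, 1]`
and `1 - W = (1 - U) / 2`. Integrating out the vertices of degree two expresses every density
through the degree `d x = ∫ U x y` and the codegree `F x y = ∫ U x z * U z y`; expanding in `U`
gives `m_{C₄}(W) = (1 + 4 t_{P₃} + 2 t_{K₂}² + t_{C₄}) / 8` and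
`m_D(W) = (1 + 8 t_{P₃} + 2 t_{K₂}² + t_{C₄} + 4 t_{K₃⁺}) / 16`, all densities taken at `U`.
The claim becomes `0 ≤ (8 - 8c) t_{P₃} + (2 - 4c) t_{K₂}² + (1 - 2c) t_{C₄} + 4 t_{K₃⁺}`.
Cauchy–Schwarz applied to `t_{K₃⁺} = ∫ F x y * (U x y * d y)` gives `t_{K₃⁺}² ≤ t_{P₃} t_{C₄}`,
so the quadratic form is nonnegative once `(8 - 8c)(1 - 2c) ≥ 4`, i.e. `4c² - 6c + 1 ≥ 0`:
this is where `(3 - √5) / 4` comes from.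
-/

open MeasureTheory

/-- Homomorphism density of a single edge `K₂`. -/
noncomputable def tK2 (U : unitInterval → unitInterval → ℝ) : ℝ :=
  ∫ x : Fin 2 → unitInterval, U (x 0) (x 1)

/-- Homomorphism density of the cherry/path `K_{1,2}`. -/
noncomputable def tP3 (U : unitInterval → unitInterval → ℝ) : ℝ :=
  ∫ x : Fin 3 → unitInterval, U (x 0) (x 1) * U (x 1) (x 2)

/-- Homomorphism density of the triangle `K₃`. -/
noncomputable def tK3 (U : unitInterval → unitInterval → ℝ) : ℝ :=
  ∫ x : Fin 3 → unitInterval, U (x 0) (x 1) * U (x 1) (x 2) * U (x 2) (x 0)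

/-- Homomorphism density of the 4-cycle `C₄`. -/
noncomputable def tC4 (U : unitInterval → unitInterval → ℝ) : ℝ :=
  ∫ x : Fin 4 → unitInterval, U (x 0) (x 1) * U (x 1) (x 2) * U (x 2) (x 3) * U (x 3) (x 0)

/-- Homomorphism density of the triangle with a pendant edge `K₃⁺`. -/
noncomputable def tK3p (U : unitInterval → unitInterval → ℝ) : ℝ :=
  ∫ x : Fin 4 → unitInterval, U (x 0) (x 1) * U (x 1) (x 2) * U (x 2) (x 0) * U (x 2) (x 3)

/-- Homomorphism density of the diamond `D = K_{1,1,2}`. -/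
noncomputable def tD (U : unitInterval → unitInterval → ℝ) : ℝ :=
  ∫ x : Fin 4 → unitInterval,
    U (x 0) (x 1) * U (x 0) (x 2) * U (x 0) (x 3) * U (x 1) (x 2) * U (x 1) (x 3)

/-- Homomorphism density of the octahedron `K_{2,2,2}` (parts `{0,1},{2,3},{4,5}`). -/
noncomputable def tK222 (U : unitInterval → unitInterval → ℝ) : ℝ :=
  ∫ x : Fin 6 → unitInterval,
    U (x 0) (x 2) * U (x 0) (x 3) * U (x 0) (x 4) * U (x 0) (x 5) *
    U (x 1) (x 2) * U (x 1) (x 3) * U (x 1) (x 4) * U (x 1) (x 5) *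
    U (x 2) (x 4) * U (x 2) (x 5) * U (x 3) (x 4) * U (x 3) (x 5)

/-- `W` is a graphon: measurable, symmetric, with values in `[0,1]`. -/
def IsGraphon (W : unitInterval → unitInterval → ℝ) : Prop :=
  Measurable (fun p : unitInterval × unitInterval => W p.1 p.2) ∧
    (∀ x y, W x y = W y x) ∧ (∀ x y, 0 ≤ W x y) ∧ (∀ x y, W x y ≤ 1)

/-- The complementary graphon `1 - W`. -/
def compl' (W : unitInterval → unitInterval → ℝ) : unitInterval → unitInterval → ℝ :=
  fun x y => 1 - W x y

open unitInterval

theorem integrable_of_abs_le {β : Type*} [MeasurableSpace β] {μ : Measure β} [IsFiniteMeasure μ]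
    {f : β → ℝ} (hf : Measurable f) {C : ℝ} (hC : ∀ x, |f x| ≤ C) : Integrable f μ :=
  .of_bound hf.aestronglyMeasurable C (ae_of_all _ hC)

theorem abs_integral_le_one {β : Type*} [MeasurableSpace β] {μ : Measure β}
    [IsProbabilityMeasure μ] {f : β → ℝ} (hf : ∀ x, |f x| ≤ 1) : |∫ x, f x ∂μ| ≤ 1 := by
  simpa using norm_integral_le_of_norm_le_const (μ := μ) (f := f) (C := 1) (ae_of_all _ hf)

theorem sq_integral_mul_le {β : Type*} [MeasurableSpace β] {μ : Measure β} {f g : β → ℝ}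
    (hf : Integrable (fun x => f x ^ 2) μ) (hg : Integrable (fun x => g x ^ 2) μ)
    (hfg : Integrable (fun x => f x * g x) μ) :
    (∫ x, f x * g x ∂μ) ^ 2 ≤ (∫ x, f x ^ 2 ∂μ) * ∫ x, g x ^ 2 ∂μ := by
  have hquad : ∀ t : ℝ, 0 ≤ (∫ x, f x ^ 2 ∂μ) * (t * t) + 2 * (∫ x, f x * g x ∂μ) * t
      + ∫ x, g x ^ 2 ∂μ := fun t => by
    calc 0 ≤ ∫ x, (t * f x + g x) ^ 2 ∂μ := integral_nonneg fun x => sq_nonneg _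
      _ = ∫ x, (t * t * f x ^ 2 + 2 * t * (f x * g x) + g x ^ 2) ∂μ := by
        congr 1; ext x; ring
      _ = _ := by
        simp (disch := fun_prop) only [integral_add, integral_const_mul]
        ring
  have hdiscrim := discrim_le_zero hquad
  rw [discrim] at hdiscrim
  nlinarith

section CubeIntegrals

variable {α : Type*} [MeasureSpace α]

theorem integral_comp_perm [SigmaFinite (volume : Measure α)] {n : ℕ} (e : Equiv.Perm (Fin n))
    (f : (Fin n → α) → ℝ) : ∫ x, f (x ∘ e) = ∫ x, f x :=
  (volume_preserving_arrowCongr' e.symm (MeasurableEquiv.refl α)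
    (MeasurePreserving.id volume)).integral_comp' f

theorem integral_prod_comm [SigmaFinite (volume : Measure α)] (f : α → α → ℝ) :
    ∫ z : α × α, f z.2 z.1 = ∫ z : α × α, f z.1 z.2 := by
  rw [Measure.volume_eq_prod]
  exact integral_prod_swap fun z : α × α => f z.1 z.2

theorem integral_fin_succ [SigmaFinite (volume : Measure α)] {n : ℕ}
    {f : (Fin (n + 1) → α) → ℝ} (hf : Integrable f) :
    ∫ x, f x = ∫ a, ∫ y, f (Fin.cons a y) := by
  have h := volume_preserving_piFinSuccAbove (fun _ : Fin (n + 1) => α) 0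
  rw [← h.symm.integral_comp', Measure.volume_eq_prod, integral_prod]
  · simp only [MeasurableEquiv.piFinSuccAbove_symm_apply, Fin.insertNthEquiv_zero]; rfl
  · exact (h.symm.integrable_comp_emb (MeasurableEquiv.measurableEmbedding _)).mpr hf

theorem integral_fin_one (f : α → ℝ) : ∫ x : Fin 1 → α, f (x 0) = ∫ a, f a :=
  (volume_preserving_funUnique (Fin 1) α).integral_comp' f

theorem measurable_fin_cons {n : ℕ} (a : α) :
    Measurable fun y : Fin n → α => (Fin.cons a y : Fin (n + 1) → α) :=
  measurable_pi_iff.mpr fun i => i.cases measurable_const measurable_pi_apply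

variable [IsFiniteMeasure (volume : Measure α)]

theorem integral_prod_of_abs_le {f : α → α → ℝ} (hf : Measurable fun z : α × α => f z.1 z.2)
    {C : ℝ} (hC : ∀ a b, |f a b| ≤ C) :
    ∫ z : α × α, f z.1 z.2 = ∫ a, ∫ b, f a b := by
  rw [Measure.volume_eq_prod, integral_prod _ (integrable_of_abs_le hf fun z => hC z.1 z.2)]

theorem integral_fin_two {f : α → α → ℝ} (hf : Measurable fun x : Fin 2 → α => f (x 0) (x 1))
    {C : ℝ} (hC : ∀ a b, |f a b| ≤ C) :
    ∫ x : Fin 2 → α, f (x 0) (x 1) = ∫ a, ∫ b, f a b := by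
  rw [integral_fin_succ (integrable_of_abs_le hf fun x => hC _ _)]
  exact integral_congr_ae (ae_of_all _ fun a => integral_fin_one (f a))

theorem integral_fin_three {f : α → α → α → ℝ}
    (hf : Measurable fun x : Fin 3 → α => f (x 0) (x 1) (x 2))
    {C : ℝ} (hC : ∀ a b c, |f a b c| ≤ C) :
    ∫ x : Fin 3 → α, f (x 0) (x 1) (x 2) = ∫ a, ∫ b, ∫ c, f a b c := by
  rw [integral_fin_succ (integrable_of_abs_le hf fun x => hC _ _ _)]
  exact integral_congr_ae (ae_of_all _ fun a =>
    integral_fin_two (hf.comp (measurable_fin_cons a)) (hC a))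

theorem integral_fin_four {f : α → α → α → α → ℝ}
    (hf : Measurable fun x : Fin 4 → α => f (x 0) (x 1) (x 2) (x 3))
    {C : ℝ} (hC : ∀ a b c d, |f a b c d| ≤ C) :
    ∫ x : Fin 4 → α, f (x 0) (x 1) (x 2) (x 3) = ∫ a, ∫ b, ∫ c, ∫ d, f a b c d := by
  rw [integral_fin_succ (integrable_of_abs_le hf fun x => hC _ _ _ _)]
  exact integral_congr_ae (ae_of_all _ fun a =>
    integral_fin_three (hf.comp (measurable_fin_cons a)) (hC a))

theorem integral_fin_three_swap {f : α → α → α → ℝ}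
    (hf : Measurable fun x : Fin 3 → α => f (x 0) (x 1) (x 2))
    {C : ℝ} (hC : ∀ a b c, |f a b c| ≤ C) :
    ∫ x : Fin 3 → α, f (x 0) (x 1) (x 2) = ∫ a, ∫ c, ∫ b, f a b c := by
  rw [← integral_comp_perm (Equiv.swap 1 2)]
  exact integral_fin_three (f := fun a c b => f a b c)
    (hf.comp (by fun_prop : Measurable fun x : Fin 3 → α => x ∘ Equiv.swap 1 2))
    fun a c b => hC a b c

theorem integral_fin_four_swap {f : α → α → α → α → ℝ}
    (hf : Measurable fun x : Fin 4 → α => f (x 0) (x 1) (x 2) (x 3))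
    {C : ℝ} (hC : ∀ a b c d, |f a b c d| ≤ C) :
    ∫ x : Fin 4 → α, f (x 0) (x 1) (x 2) (x 3) = ∫ a, ∫ c, ∫ b, ∫ d, f a b c d := by
  rw [← integral_comp_perm (Equiv.swap 1 2)]
  exact integral_fin_four (f := fun a c b d => f a b c d)
    (hf.comp (by fun_prop : Measurable fun x : Fin 4 → α => x ∘ Equiv.swap 1 2))
    fun a c b d => hC a b c d

end CubeIntegrals

structure IsSignedGraphon (U : I → I → ℝ) : Prop where
  measurable : Measurable fun p : I × I => U p.1 p.2
  symm : ∀ x y, U x y = U y x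
  abs_le_one : ∀ x y, |U x y| ≤ 1

theorem IsGraphon.isSignedGraphon_two_mul_sub_one {W : I → I → ℝ} (hW : IsGraphon W) :
    IsSignedGraphon (2 * W - 1) := by
  obtain ⟨hm, hs, h0, h1⟩ := hW
  refine ⟨?_, fun x y => ?_, fun x y => abs_le.mpr ⟨?_, ?_⟩⟩ <;>
    simp only [Pi.sub_apply, Pi.mul_apply, Pi.ofNat_apply]
  · fun_prop
  · rw [hs]
  all_goals linarith [h0 x y, h1 x y]

noncomputable def degree (U : I → I → ℝ) (x : I) : ℝ := ∫ y, U x y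

noncomputable def codegree (U : I → I → ℝ) (x y : I) : ℝ := ∫ z, U x z * U z y

namespace IsSignedGraphon

variable {U : I → I → ℝ}

theorem of_eq_const_add_mul {V : I → I → ℝ} (hU : IsSignedGraphon U) {a b : ℝ}
    (hV : ∀ x y, V x y = a + b * U x y) (hab : |a| + |b| ≤ 1) : IsSignedGraphon V := by
  obtain rfl : V = fun x y => a + b * U x y := funext₂ hV
  refine ⟨by have := hU.measurable; fun_prop, fun x y => by rw [hU.symm], fun x y => ?_⟩
  calc |a + b * U x y| ≤ |a| + |b| * |U x y| := by rw [← abs_mul]; exact abs_add_le _ _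
    _ ≤ |a| + |b| := by gcongr; exact mul_le_of_le_one_right (abs_nonneg b) (hU.abs_le_one x y)
    _ ≤ 1 := hab

theorem measurable_degree (hU : IsSignedGraphon U) : Measurable (degree U) :=
  hU.measurable.stronglyMeasurable.integral_prod_right'.measurable

theorem abs_degree_le_one (hU : IsSignedGraphon U) (x : I) : |degree U x| ≤ 1 :=
  abs_integral_le_one (hU.abs_le_one x)

theorem measurable_codegree (hU : IsSignedGraphon U) :
    Measurable fun z : I × I => codegree U z.1 z.2 := by
  have := hU.measurable
  exact (by fun_prop : Measurable fun q : (I × I) × I => U q.1.1 q.2 * U q.2 q.1.2)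
    |>.stronglyMeasurable.integral_prod_right'.measurable

theorem abs_codegree_le_one (hU : IsSignedGraphon U) (x y : I) : |codegree U x y| ≤ 1 :=
  abs_integral_le_one fun z => by simp only [abs_mul]; bound [hU.abs_le_one]

theorem codegree_comm (hU : IsSignedGraphon U) (x y : I) : codegree U x y = codegree U y x := by
  simp only [codegree, hU.symm x, hU.symm _ y, mul_comm]

theorem codegree_of_eq_const_add_mul (hU : IsSignedGraphon U) {V : I → I → ℝ} {a b : ℝ}
    (hV : ∀ x y, V x y = a + b * U x y) (x y : I) :
    codegree V x y = a ^ 2 + a * b * (degree U x + degree U y) + b ^ 2 * codegree U x y := by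
  have := hU.measurable
  have h₁ : Integrable fun z => U x z := integrable_of_abs_le (by fun_prop) (hU.abs_le_one x)
  have h₂ : Integrable fun z => U z y :=
    integrable_of_abs_le (by fun_prop) fun z => hU.abs_le_one z y
  have h₃ : Integrable fun z => U x z * U z y :=
    integrable_of_abs_le (by fun_prop) fun z => by simp only [abs_mul]; bound [hU.abs_le_one]
  calc codegree V x y
      = ∫ z, (a ^ 2 + a * b * U x z + a * b * U z y + b ^ 2 * (U x z * U z y)) := by
        simp only [codegree, hV]; congr 1; ext z; ring
    _ = _ := by
        simp (disch := fun_prop) only [integral_add, integral_const_mul, integral_const]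
        simp only [degree, codegree, hU.symm _ y, probReal_univ, smul_eq_mul, one_mul]
        ring

theorem integrable_codegree_sq (hU : IsSignedGraphon U) :
    Integrable fun z : I × I => codegree U z.1 z.2 ^ 2 :=
  integrable_of_abs_le (by have := hU.measurable_codegree; fun_prop)
    fun z => by simp only [abs_pow]; bound [hU.abs_codegree_le_one]

theorem integrable_mul_codegree_sq (hU : IsSignedGraphon U) :
    Integrable fun z : I × I => U z.1 z.2 * codegree U z.1 z.2 ^ 2 :=
  integrable_of_abs_le (by have := hU.measurable; have := hU.measurable_codegree; fun_prop)
    fun z => by simp only [abs_mul, abs_pow]; bound [hU.abs_le_one, hU.abs_codegree_le_one]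

theorem tK2_eq_integral_degree (hU : IsSignedGraphon U) : tK2 U = ∫ x, degree U x :=
  integral_fin_two (by have := hU.measurable; fun_prop) hU.abs_le_one

theorem tK2_sq_eq_integral_degree_mul_degree (hU : IsSignedGraphon U) :
    tK2 U ^ 2 = ∫ z : I × I, degree U z.1 * degree U z.2 := by
  rw [Measure.volume_eq_prod, integral_prod_mul, hU.tK2_eq_integral_degree, sq]

theorem tP3_eq_integral_mul_degree_snd (hU : IsSignedGraphon U) :
    tP3 U = ∫ z : I × I, U z.1 z.2 * degree U z.2 := by
  have := hU.measurable
  have := hU.measurable_degree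
  calc tP3 U = ∫ a, ∫ b, ∫ c, U a b * U b c :=
        integral_fin_three (f := fun a b c => U a b * U b c) (by fun_prop)
          (fun _ _ _ => by simp only [abs_mul]; bound [hU.abs_le_one])
    _ = ∫ a, ∫ b, U a b * degree U b := by simp only [integral_const_mul]; rfl
    _ = _ := (integral_prod_of_abs_le (f := fun a b => U a b * degree U b) (by fun_prop)
          (fun _ _ => by simp only [abs_mul]; bound [hU.abs_le_one, hU.abs_degree_le_one])).symm

theorem tP3_eq_integral_mul_degree_fst (hU : IsSignedGraphon U) :
    tP3 U = ∫ z : I × I, U z.1 z.2 * degree U z.1 := by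
  rw [hU.tP3_eq_integral_mul_degree_snd, ← integral_prod_comm fun a b => U a b * degree U b]
  simp only [hU.symm _ _]

theorem tP3_eq_integral_degree_sq (hU : IsSignedGraphon U) :
    tP3 U = ∫ x, degree U x ^ 2 := by
  have := hU.measurable
  have := hU.measurable_degree
  rw [hU.tP3_eq_integral_mul_degree_fst,
    integral_prod_of_abs_le (f := fun a b => U a b * degree U a) (by fun_prop)
      (fun _ _ => by simp only [abs_mul]; bound [hU.abs_le_one, hU.abs_degree_le_one])]
  simp only [integral_mul_const, sq]
  rfl

theorem tP3_eq_integral_degree_fst_sq (hU : IsSignedGraphon U) :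
    tP3 U = ∫ z : I × I, degree U z.1 ^ 2 := by
  simp [Measure.volume_eq_prod, integral_fun_fst fun x => degree U x ^ 2,
    hU.tP3_eq_integral_degree_sq]

theorem tP3_eq_integral_degree_snd_sq (hU : IsSignedGraphon U) :
    tP3 U = ∫ z : I × I, degree U z.2 ^ 2 := by
  simp [Measure.volume_eq_prod, integral_fun_snd fun x => degree U x ^ 2,
    hU.tP3_eq_integral_degree_sq]

theorem tP3_eq_integral_codegree (hU : IsSignedGraphon U) :
    tP3 U = ∫ z : I × I, codegree U z.1 z.2 := by
  have := hU.measurable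
  calc tP3 U = ∫ a, ∫ c, ∫ b, U a b * U b c :=
        integral_fin_three_swap (f := fun a b c => U a b * U b c) (by fun_prop)
          (fun _ _ _ => by simp only [abs_mul]; bound [hU.abs_le_one])
    _ = _ := (integral_prod_of_abs_le (f := codegree U) hU.measurable_codegree
          hU.abs_codegree_le_one).symm

theorem tC4_eq_integral_codegree_sq (hU : IsSignedGraphon U) :
    tC4 U = ∫ z : I × I, codegree U z.1 z.2 ^ 2 := by
  have := hU.measurable
  have := hU.measurable_codegree
  calc tC4 U = ∫ a, ∫ c, ∫ b, ∫ d, U a b * U b c * (U c d * U d a) := by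
        rw [← integral_fin_four_swap (by fun_prop)
          (fun _ _ _ _ => by simp only [abs_mul]; bound [hU.abs_le_one])]
        simp only [tC4, mul_assoc]
    _ = ∫ a, ∫ c, codegree U a c * codegree U c a := by
        simp only [integral_const_mul, integral_mul_const]; rfl
    _ = _ := by
        rw [integral_prod_of_abs_le (f := fun a b => codegree U a b ^ 2) (by fun_prop)
          (fun _ _ => by simp only [abs_pow]; bound [hU.abs_codegree_le_one])]
        simp only [hU.codegree_comm _ _, sq]

theorem tD_eq_integral_mul_codegree_sq (hU : IsSignedGraphon U) :
    tD U = ∫ z : I × I, U z.1 z.2 * codegree U z.1 z.2 ^ 2 := by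
  have := hU.measurable
  have := hU.measurable_codegree
  calc tD U = ∫ a, ∫ b, ∫ c, ∫ d, U a b * (U a c * U c b) * (U a d * U d b) := by
        rw [tD, ← integral_fin_four (by fun_prop)
          (fun _ _ _ _ => by simp only [abs_mul]; bound [hU.abs_le_one])]
        congr 1; ext x
        rw [hU.symm (x 1) (x 2), hU.symm (x 1) (x 3)]
        ring
    _ = ∫ a, ∫ b, U a b * codegree U a b * codegree U a b := by
        simp only [integral_const_mul, integral_mul_const]; rfl
    _ = _ := by
        rw [integral_prod_of_abs_le (f := fun a b => U a b * codegree U a b ^ 2) (by fun_prop)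
          (fun _ _ => by
            simp only [abs_mul, abs_pow]; bound [hU.abs_le_one, hU.abs_codegree_le_one])]
        simp only [sq, mul_assoc]

theorem tK3p_eq_integral_mul_codegree_mul_degree_snd (hU : IsSignedGraphon U) :
    tK3p U = ∫ z : I × I, U z.1 z.2 * codegree U z.1 z.2 * degree U z.2 := by
  have := hU.measurable
  have := hU.measurable_codegree
  have := hU.measurable_degree
  calc tK3p U = ∫ a, ∫ c, ∫ b, ∫ d, U a b * U b c * U c a * U c d :=
        integral_fin_four_swap (f := fun a b c d => U a b * U b c * U c a * U c d)
          (by fun_prop) (fun _ _ _ _ => by simp only [abs_mul]; bound [hU.abs_le_one])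
    _ = ∫ a, ∫ c, codegree U a c * U c a * degree U c := by
        simp only [integral_const_mul, integral_mul_const]; rfl
    _ = _ := by
        rw [integral_prod_of_abs_le (f := fun a b => U a b * codegree U a b * degree U b)
          (by fun_prop) (fun _ _ => by
            simp only [abs_mul]
            bound [hU.abs_le_one, hU.abs_codegree_le_one, hU.abs_degree_le_one])]
        congr 1; ext a; congr 1; ext c
        rw [hU.symm c a, mul_comm (codegree U a c)]

theorem tK3p_eq_integral_mul_codegree_mul_degree_fst (hU : IsSignedGraphon U) :
    tK3p U = ∫ z : I × I, U z.1 z.2 * codegree U z.1 z.2 * degree U z.1 := by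
  rw [hU.tK3p_eq_integral_mul_codegree_mul_degree_snd,
    ← integral_prod_comm fun a b => U a b * codegree U a b * degree U b]
  simp only [hU.symm _ _, hU.codegree_comm _ _]

theorem tP3_nonneg (hU : IsSignedGraphon U) : 0 ≤ tP3 U :=
  hU.tP3_eq_integral_degree_sq ▸ integral_nonneg fun _ => sq_nonneg _

theorem tC4_nonneg (hU : IsSignedGraphon U) : 0 ≤ tC4 U :=
  hU.tC4_eq_integral_codegree_sq ▸ integral_nonneg fun _ => sq_nonneg _

theorem sq_tK3p_le (hU : IsSignedGraphon U) : tK3p U ^ 2 ≤ tP3 U * tC4 U := by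
  have := hU.measurable
  have := hU.measurable_degree
  have := hU.measurable_codegree
  have hU₁ := hU.abs_le_one
  have hd := hU.abs_degree_le_one
  have hF := hU.abs_codegree_le_one
  have i₁ := hU.integrable_codegree_sq
  have i₂ : Integrable fun z : I × I => (U z.1 z.2 * degree U z.2) ^ 2 :=
    integrable_of_abs_le (by fun_prop) fun z => by simp only [abs_pow, abs_mul]; bound [hU₁, hd]
  have i₃ : Integrable fun z : I × I => codegree U z.1 z.2 * (U z.1 z.2 * degree U z.2) :=
    integrable_of_abs_le (by fun_prop) fun z => by simp only [abs_mul]; bound [hU₁, hd, hF]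
  have i₄ : Integrable fun z : I × I => degree U z.2 ^ 2 :=
    integrable_of_abs_le (by fun_prop) fun z => by simp only [abs_pow]; bound [hd]
  have hT : tK3p U = ∫ z : I × I, codegree U z.1 z.2 * (U z.1 z.2 * degree U z.2) := by
    rw [hU.tK3p_eq_integral_mul_codegree_mul_degree_snd]; congr 1; ext z; ring
  calc tK3p U ^ 2
      ≤ (∫ z : I × I, codegree U z.1 z.2 ^ 2) * ∫ z : I × I, (U z.1 z.2 * degree U z.2) ^ 2 :=
        hT ▸ sq_integral_mul_le i₁ i₂ i₃
    _ ≤ (∫ z : I × I, codegree U z.1 z.2 ^ 2) * ∫ z : I × I, degree U z.2 ^ 2 := by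
        refine mul_le_mul_of_nonneg_left (integral_mono i₂ i₄ fun z => ?_)
          (integral_nonneg fun _ => sq_nonneg _)
        rw [mul_pow]
        exact mul_le_of_le_one_left (sq_nonneg _) ((sq_le_one_iff_abs_le_one _).mpr (hU₁ _ _))
    _ = tP3 U * tC4 U := by
        rw [← hU.tC4_eq_integral_codegree_sq, ← hU.tP3_eq_integral_degree_snd_sq, mul_comm]

theorem integral_sq_one_add_codegree_add_sq_degree (hU : IsSignedGraphon U) :
    ∫ z : I × I, ((1 + codegree U z.1 z.2) ^ 2 + (degree U z.1 + degree U z.2) ^ 2) =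
      1 + 4 * tP3 U + 2 * tK2 U ^ 2 + tC4 U := by
  have := hU.measurable_degree
  have := hU.measurable_codegree
  have hd := hU.abs_degree_le_one
  have i₁ : Integrable fun z : I × I => codegree U z.1 z.2 :=
    integrable_of_abs_le (by fun_prop) fun z => hU.abs_codegree_le_one _ _
  have i₂ := hU.integrable_codegree_sq
  have i₃ : Integrable fun z : I × I => degree U z.1 ^ 2 :=
    integrable_of_abs_le (by fun_prop) fun z => by simp only [abs_pow]; bound [hd]
  have i₄ : Integrable fun z : I × I => degree U z.2 ^ 2 :=
    integrable_of_abs_le (by fun_prop) fun z => by simp only [abs_pow]; bound [hd]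
  have i₅ : Integrable fun z : I × I => degree U z.1 * degree U z.2 :=
    integrable_of_abs_le (by fun_prop) fun z => by simp only [abs_mul]; bound [hd]
  calc _ = ∫ z : I × I, (1 + 2 * codegree U z.1 z.2 + codegree U z.1 z.2 ^ 2
        + degree U z.1 ^ 2 + degree U z.2 ^ 2 + 2 * (degree U z.1 * degree U z.2)) := by
        congr 1; ext z; ring
    _ = _ := by
      simp (disch := fun_prop) only [integral_add, integral_const_mul, integral_const]
      rw [← hU.tP3_eq_integral_codegree, ← hU.tC4_eq_integral_codegree_sq,
        ← hU.tP3_eq_integral_degree_fst_sq, ← hU.tP3_eq_integral_degree_snd_sq,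
        ← hU.tK2_sq_eq_integral_degree_mul_degree]
      simp only [probReal_univ, smul_eq_mul]
      ring

theorem integral_mul_one_add_codegree_mul_add_degree (hU : IsSignedGraphon U) :
    ∫ z : I × I, U z.1 z.2 * (1 + codegree U z.1 z.2) * (degree U z.1 + degree U z.2) =
      2 * (tP3 U + tK3p U) := by
  have := hU.measurable
  have := hU.measurable_degree
  have := hU.measurable_codegree
  have hU₁ := hU.abs_le_one
  have hd := hU.abs_degree_le_one
  have hF := hU.abs_codegree_le_one
  have i₁ : Integrable fun z : I × I => U z.1 z.2 * degree U z.1 :=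
    integrable_of_abs_le (by fun_prop) fun z => by simp only [abs_mul]; bound [hU₁, hd]
  have i₂ : Integrable fun z : I × I => U z.1 z.2 * degree U z.2 :=
    integrable_of_abs_le (by fun_prop) fun z => by simp only [abs_mul]; bound [hU₁, hd]
  have i₃ : Integrable fun z : I × I => U z.1 z.2 * codegree U z.1 z.2 * degree U z.1 :=
    integrable_of_abs_le (by fun_prop) fun z => by simp only [abs_mul]; bound [hU₁, hd, hF]
  have i₄ : Integrable fun z : I × I => U z.1 z.2 * codegree U z.1 z.2 * degree U z.2 :=
    integrable_of_abs_le (by fun_prop) fun z => by simp only [abs_mul]; bound [hU₁, hd, hF]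
  calc _ = ∫ z : I × I, (U z.1 z.2 * degree U z.1 + U z.1 z.2 * degree U z.2
        + U z.1 z.2 * codegree U z.1 z.2 * degree U z.1
        + U z.1 z.2 * codegree U z.1 z.2 * degree U z.2) := by
        congr 1; ext z; ring
    _ = _ := by
      simp (disch := fun_prop) only [integral_add]
      rw [← hU.tP3_eq_integral_mul_degree_fst, ← hU.tP3_eq_integral_mul_degree_snd,
        ← hU.tK3p_eq_integral_mul_codegree_mul_degree_fst,
        ← hU.tK3p_eq_integral_mul_codegree_mul_degree_snd]
      ring

theorem tC4_add_tC4 (hU : IsSignedGraphon U) :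
    tC4 (fun x y => (1 + U x y) / 2) + tC4 (fun x y => (1 - U x y) / 2) =
      (1 + 4 * tP3 U + 2 * tK2 U ^ 2 + tC4 U) / 8 := by
  have h₁ : ∀ x y, (1 + U x y) / 2 = 1 / 2 + 1 / 2 * U x y := fun _ _ => by ring
  have h₂ : ∀ x y, (1 - U x y) / 2 = 1 / 2 + -1 / 2 * U x y := fun _ _ => by ring
  have hV₁ := hU.of_eq_const_add_mul h₁ (by norm_num)
  have hV₂ := hU.of_eq_const_add_mul h₂ (by norm_num)
  rw [hV₁.tC4_eq_integral_codegree_sq, hV₂.tC4_eq_integral_codegree_sq,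
    ← integral_add hV₁.integrable_codegree_sq hV₂.integrable_codegree_sq,
    ← hU.integral_sq_one_add_codegree_add_sq_degree, ← integral_div]
  congr 1; ext z
  rw [hU.codegree_of_eq_const_add_mul h₁, hU.codegree_of_eq_const_add_mul h₂]
  ring

theorem tD_add_tD (hU : IsSignedGraphon U) :
    tD (fun x y => (1 + U x y) / 2) + tD (fun x y => (1 - U x y) / 2) =
      (1 + 8 * tP3 U + 2 * tK2 U ^ 2 + tC4 U + 4 * tK3p U) / 16 := by
  have hC4 := hU.tC4_add_tC4
  set V₁ : I → I → ℝ := fun x y => (1 + U x y) / 2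
  set V₂ : I → I → ℝ := fun x y => (1 - U x y) / 2
  have h₁ : ∀ x y, V₁ x y = 1 / 2 + 1 / 2 * U x y := fun _ _ => by simp only [V₁]; ring
  have h₂ : ∀ x y, V₂ x y = 1 / 2 + -1 / 2 * U x y := fun _ _ => by simp only [V₂]; ring
  have hV₁ := hU.of_eq_const_add_mul h₁ (by norm_num)
  have hV₂ := hU.of_eq_const_add_mul h₂ (by norm_num)
  have := hV₁.integrable_codegree_sq
  have := hV₂.integrable_codegree_sq
  have := hV₁.integrable_mul_codegree_sq
  have := hV₂.integrable_mul_codegree_sq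
  -- With `Gᵢ = codegree Vᵢ`, the integrand is `U (G₁² - G₂²) / 2`, and
  -- `G₁ - G₂ = (d x + d y) / 2`, `G₁ + G₂ = (1 + F x y) / 2`.
  have key : ∫ z : I × I, (V₁ z.1 z.2 * codegree V₁ z.1 z.2 ^ 2
      + V₂ z.1 z.2 * codegree V₂ z.1 z.2 ^ 2
      - (codegree V₁ z.1 z.2 ^ 2 + codegree V₂ z.1 z.2 ^ 2) / 2) = 2 * (tP3 U + tK3p U) / 8 := by
    rw [← hU.integral_mul_one_add_codegree_mul_add_degree, ← integral_div]
    congr 1; ext z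
    rw [hU.codegree_of_eq_const_add_mul h₁, hU.codegree_of_eq_const_add_mul h₂, h₁, h₂]
    ring
  simp (disch := fun_prop) only [integral_sub, integral_add, integral_div] at key
  rw [← hV₁.tD_eq_integral_mul_codegree_sq, ← hV₂.tD_eq_integral_mul_codegree_sq,
    ← hV₁.tC4_eq_integral_codegree_sq, ← hV₂.tC4_eq_integral_codegree_sq] at key
  linarith

end IsSignedGraphon

theorem four_le_mul_of_le {c : ℝ} (hc : c ≤ (3 - √5) / 4) : 4 ≤ (8 - 8 * c) * (1 - 2 * c) := by
  have h5 : √5 ^ 2 = 5 := Real.sq_sqrt (by norm_num)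
  have hc' : c ≤ (3 + √5) / 4 := hc.trans (by linarith [Real.sqrt_nonneg 5])
  nlinarith [mul_nonneg (sub_nonneg.2 hc) (sub_nonneg.2 hc')]

theorem neg_four_mul_le_of_sq_le_mul {a b p q t : ℝ} (ha : 0 ≤ a) (hb : 0 ≤ b) (hp : 0 ≤ p)
    (hq : 0 ≤ q) (hab : 4 ≤ a * b) (ht : t ^ 2 ≤ p * q) : -(4 * t) ≤ a * p + b * q := by
  have hsq : (4 * t) ^ 2 ≤ (a * p + b * q) ^ 2 := by
    nlinarith [sq_nonneg (a * p - b * q), mul_nonneg (mul_nonneg hp hq) (sub_nonneg.2 hab)]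
  exact neg_le.mp (abs_le_of_sq_le_sq' hsq (by positivity)).1

theorem diamond_vs_C4_general (c : ℝ) (hc1 : c ≤ (3 - Real.sqrt 5) / 4)
    (W : unitInterval → unitInterval → ℝ) (hW : IsGraphon W) :
    c * (tC4 W + tC4 (compl' W) - 1 / 8) ≤ tD W + tD (compl' W) - 1 / 16 := by
  obtain ⟨U, hU, rfl⟩ : ∃ U, IsSignedGraphon U ∧ W = fun x y => (1 + U x y) / 2 :=
    ⟨2 * W - 1, hW.isSignedGraphon_two_mul_sub_one, by
      ext; simp only [Pi.sub_apply, Pi.mul_apply, Pi.ofNat_apply]; ring⟩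
  have hcompl : compl' (fun x y => (1 + U x y) / 2) = fun x y => (1 - U x y) / 2 := by
    ext; simp only [compl']; ring
  rw [hcompl, hU.tC4_add_tC4, hU.tD_add_tD]
  have h5 : 2 ≤ √5 := Real.le_sqrt_of_sq_le (by norm_num)
  have hT := neg_four_mul_le_of_sq_le_mul (by linarith) (by linarith) hU.tP3_nonneg
    hU.tC4_nonneg (four_le_mul_of_le hc1) hU.sq_tK3p_le
  nlinarith [mul_nonneg (by linarith : (0 : ℝ) ≤ 1 - 2 * c) (sq_nonneg (tK2 U))]

/-- For `0 ≤ c ≤ (3-√5)/4` and every graphon `W`: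
`m_D(W) - 1/16 ≥ c·(m_{C₄}(W) - 1/8)`, where `D` is the diamond. -/
theorem diamond_vs_C4 (c : ℝ) (hc0 : 0 ≤ c) (hc1 : c ≤ (3 - Real.sqrt 5) / 4)
    (W : unitInterval → unitInterval → ℝ) (hW : IsGraphon W) :
    c * (tC4 W + tC4 (compl' W) - 1 / 8) ≤ tD W + tD (compl' W) - 1 / 16 :=
  diamond_vs_C4_general c hc1 W hW
end

section
/- For every graphon W, m_{K_{1,1,t}}(W) ≥ 2^{1-e(K_{1,1,t})} = 2^{-2t}, i.e., the graph K_{1,1,t} (t triangles sharing a common edge) is common, assuming the inequalities t_{K_{1,1,t}}(W) ≥ t_{K_3}(W)^t / t_{K_2}(W)^{t-1} (and the same with 1-W), Lemma 2.3, and m_{K_3}(W) ≥ 1/4. -/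
open MeasureTheory

/-- Homomorphism density of a finite simple graph `G` in a kernel
`W : [0,1]² → ℝ` (symmetrised, which agrees with the usual definition for
symmetric `W`). -/
noncomputable def homDensity {V : Type*} [Fintype V] [DecidableEq V]
    (G : SimpleGraph V) (W : unitInterval → unitInterval → ℝ) : ℝ :=
  letI := Classical.decRel G.Adj
  ∫ x : V → unitInterval, ∏ e ∈ G.edgeFinset,
    Sym2.lift ⟨fun a b => (W (x a) (x b) + W (x b) (x a)) / 2, fun a b => by ring⟩ e

/-- The complete tripartite graph `K_{1,1,t}`, with parts `{0}`, `{1}` and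
`{2,…,t+1}` inside `Fin (t+2)`: `t` triangles sharing a common edge. -/
def K11 (t : ℕ) : SimpleGraph (Fin (t + 2)) :=
  SimpleGraph.fromRel (fun i j => i.val < 2 ∨ j.val < 2)

/-! Let `x, y` be the triangle densities of `W` and `1 - W`, and `p, q = 1 - p` their edge
densities, so that `x ≤ p` and `y ≤ q`. The assumed bounds give
`m_{K_{1,1,t}}(W) ≥ x^t / p^(t-1) + y^t / q^(t-1)`, and by convexity of `s ↦ s^t` at the points
`x / p, y / q` with weights `p, q` (Radon's inequality) this is at least `(x + y)^t ≥ 4^(-t)`. -/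

open unitInterval

lemma IsGraphon.compl' {W : I → I → ℝ} (hW : IsGraphon W) : IsGraphon (compl' W) := by
  obtain ⟨hmeas, hsymm, hnonneg, hle⟩ := hW
  refine ⟨measurable_const.sub hmeas, fun x y => ?_, fun x y => ?_, fun x y => ?_⟩ <;>
    simp only [_root_.compl', hsymm x y, sub_nonneg, sub_le_self_iff, hle, hnonneg]

section EdgeWeight

variable {V : Type*} (W : I → I → ℝ) (x : V → I)

noncomputable def edgeWeight : Sym2 V → ℝ :=
  Sym2.lift ⟨fun a b => (W (x a) (x b) + W (x b) (x a)) / 2, fun a b => by ring⟩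

@[simp]
lemma edgeWeight_mk (a b : V) :
    edgeWeight W x s(a, b) = (W (x a) (x b) + W (x b) (x a)) / 2 := rfl

lemma edgeWeight_comp {U : Type*} (f : U → V) (e : Sym2 U) :
    edgeWeight W (x ∘ f) e = edgeWeight W x (e.map f) := by
  induction e using Sym2.ind with
  | _ a b => rfl

lemma homDensity_eq_integral [Fintype V] [DecidableEq V] (G : SimpleGraph V)
    [Fintype G.edgeSet] :
    homDensity G W = ∫ x : V → I, ∏ e ∈ G.edgeFinset, edgeWeight W x e := by
  unfold homDensity edgeWeight
  congr!

variable {W}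

lemma edgeWeight_nonneg (hW : IsGraphon W) (e : Sym2 V) : 0 ≤ edgeWeight W x e := by
  induction e using Sym2.ind with
  | _ a b => linarith [edgeWeight_mk W x a b, hW.2.2.1 (x a) (x b), hW.2.2.1 (x b) (x a)]

lemma edgeWeight_le_one (hW : IsGraphon W) (e : Sym2 V) : edgeWeight W x e ≤ 1 := by
  induction e using Sym2.ind with
  | _ a b => linarith [edgeWeight_mk W x a b, hW.2.2.2 (x a) (x b), hW.2.2.2 (x b) (x a)]

lemma edgeWeight_compl' (e : Sym2 V) : edgeWeight (compl' W) x e = 1 - edgeWeight W x e := by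
  induction e using Sym2.ind with
  | _ a b => simp only [edgeWeight_mk, _root_.compl']; ring

lemma measurable_edgeWeight [Countable V] (hW : Measurable fun p : I × I => W p.1 p.2)
    (e : Sym2 V) : Measurable fun x : V → I => edgeWeight W x e := by
  induction e using Sym2.ind with
  | _ a b =>
    have hab := hW.fun_comp (f := fun x : V → I => (x a, x b))
      ((measurable_pi_apply a).prodMk (measurable_pi_apply b))
    have hba := hW.fun_comp (f := fun x : V → I => (x b, x a))
      ((measurable_pi_apply b).prodMk (measurable_pi_apply a))
    exact (hab.add hba).div_const 2

lemma integrable_prod_edgeWeight [Fintype V] (hW : IsGraphon W) (s : Finset (Sym2 V)) :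
    Integrable fun x : V → I => ∏ e ∈ s, edgeWeight W x e := by
  refine (integrable_const (1 : ℝ)).mono'
    (Finset.measurable_prod s fun e _ => measurable_edgeWeight hW.1 e).aestronglyMeasurable
    (ae_of_all _ fun x => ?_)
  rw [Real.norm_eq_abs, abs_le]
  exact ⟨by linarith [Finset.prod_nonneg fun e (_ : e ∈ s) => edgeWeight_nonneg x hW e],
    Finset.prod_le_one (fun e _ => edgeWeight_nonneg x hW e) fun e _ => edgeWeight_le_one x hW e⟩

lemma homDensity_nonneg [Fintype V] [DecidableEq V] (hW : IsGraphon W) (G : SimpleGraph V) :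
    0 ≤ homDensity G W := by
  classical
  rw [homDensity_eq_integral]
  exact integral_nonneg fun x => Finset.prod_nonneg fun e _ => edgeWeight_nonneg x hW e

end EdgeWeight

lemma measurePreserving_removeNth {α : Type*} [MeasurableSpace α] (μ : Measure α)
    [IsProbabilityMeasure μ] {n : ℕ} (i : Fin (n + 1)) :
    MeasurePreserving (Fin.removeNth i) (Measure.pi fun _ => μ) (Measure.pi fun _ => μ) :=
  measurePreserving_snd.comp (measurePreserving_piFinSuccAbove (fun _ => μ) i)

lemma edgeFinset_top_fin_two [Fintype (⊤ : SimpleGraph (Fin 2)).edgeSet] :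
    (⊤ : SimpleGraph (Fin 2)).edgeFinset = {s(0, 1)} := by
  ext e
  induction e using Sym2.ind with
  | _ a b =>
    simp only [SimpleGraph.mem_edgeFinset, SimpleGraph.mem_edgeSet, SimpleGraph.top_adj,
      Finset.mem_singleton]
    revert a b
    decide

lemma homDensity_top_fin_two (W : I → I → ℝ) :
    homDensity (⊤ : SimpleGraph (Fin 2)) W = ∫ x : Fin 2 → I, edgeWeight W x s(0, 1) := by
  classical
  simp only [homDensity_eq_integral, edgeFinset_top_fin_two, Finset.prod_singleton]

lemma homDensity_top_fin_two_add_compl' {W : I → I → ℝ} (hW : IsGraphon W) :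
    homDensity (⊤ : SimpleGraph (Fin 2)) W + homDensity (⊤ : SimpleGraph (Fin 2)) (compl' W)
      = 1 := by
  have hint := integrable_prod_edgeWeight hW ({s(0, 1)} : Finset (Sym2 (Fin 2)))
  simp only [Finset.prod_singleton] at hint
  simp only [homDensity_top_fin_two, edgeWeight_compl', integral_sub (integrable_const 1) hint,
    integral_const, probReal_univ, smul_eq_mul, one_mul]
  ring

lemma homDensity_top_fin_three_le {W : I → I → ℝ} (hW : IsGraphon W) :
    homDensity (⊤ : SimpleGraph (Fin 3)) W ≤ homDensity (⊤ : SimpleGraph (Fin 2)) W := by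
  classical
  have hmem : s(0, 1) ∈ (⊤ : SimpleGraph (Fin 3)).edgeFinset := by
    simp only [SimpleGraph.mem_edgeFinset, SimpleGraph.mem_edgeSet, SimpleGraph.top_adj]
    decide
  have hint : Integrable fun x : Fin 3 → I => edgeWeight W x s(0, 1) := by
    simpa using integrable_prod_edgeWeight hW ({s(0, 1)} : Finset (Sym2 (Fin 3)))
  have hmarg : ∫ x : Fin 3 → I, edgeWeight W x s(0, 1)
      = ∫ y : Fin 2 → I, edgeWeight W y s(0, 1) := by
    have hmp := measurePreserving_removeNth (volume : Measure I) (2 : Fin 3)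
    rw [volume_pi, volume_pi, ← hmp.map_eq, integral_map hmp.measurable.aemeasurable
      (measurable_edgeWeight hW.1 _).aestronglyMeasurable]
    exact integral_congr_ae (ae_of_all _ fun x => edgeWeight_comp W x _ s(0, 1))
  rw [homDensity_eq_integral, homDensity_top_fin_two, ← hmarg]
  refine integral_mono (integrable_prod_edgeWeight hW _) hint fun x => ?_
  rw [← Finset.mul_prod_erase _ _ hmem]
  exact mul_le_of_le_one_right (edgeWeight_nonneg x hW _) (Finset.prod_le_one
    (fun e _ => edgeWeight_nonneg x hW e) fun e _ => edgeWeight_le_one x hW e)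

lemma mul_div_pow_succ_of_imp {p x : ℝ} (h : p = 0 → x = 0) (m : ℕ) :
    p * (x / p) ^ (m + 1) = x ^ (m + 1) / p ^ m := by
  rcases eq_or_ne p 0 with rfl | hp
  · simp [h rfl]
  · rw [div_pow, pow_succ' p, mul_div_assoc', mul_div_mul_left _ _ hp]

/-- Radon's inequality for weights `p + q = 1`. The bounds `x ≤ p`, `y ≤ q` make it hold also for
a zero weight, where `x / 0 = 0`. -/
lemma pow_add_le_pow_div_add_pow_div {x y p q : ℝ} (hx : 0 ≤ x) (hy : 0 ≤ y) (hxp : x ≤ p)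
    (hyq : y ≤ q) (hpq : p + q = 1) (n : ℕ) :
    (x + y) ^ n ≤ x ^ n / p ^ (n - 1) + y ^ n / q ^ (n - 1) := by
  obtain _ | m := n
  · norm_num
  have hp0 : p = 0 → x = 0 := fun hp => le_antisymm (hp ▸ hxp) hx
  have hq0 : q = 0 → y = 0 := fun hq => le_antisymm (hq ▸ hyq) hy
  have hconv := (convexOn_pow (m + 1)).2 (Set.mem_Ici.2 (div_nonneg hx (hx.trans hxp)))
    (Set.mem_Ici.2 (div_nonneg hy (hy.trans hyq))) (hx.trans hxp) (hy.trans hyq) hpq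
  simp only [smul_eq_mul, mul_div_cancel_of_imp' hp0, mul_div_cancel_of_imp' hq0,
    mul_div_pow_succ_of_imp hp0, mul_div_pow_succ_of_imp hq0] at hconv
  simpa using hconv

theorem K11t_common_general (t : ℕ)
    (W : unitInterval → unitInterval → ℝ) (hW : IsGraphon W)
    (h1 : homDensity (⊤ : SimpleGraph (Fin 3)) W ^ t /
        homDensity (⊤ : SimpleGraph (Fin 2)) W ^ (t - 1) ≤ homDensity (K11 t) W)
    (h2 : homDensity (⊤ : SimpleGraph (Fin 3)) (compl' W) ^ t /
        homDensity (⊤ : SimpleGraph (Fin 2)) (compl' W) ^ (t - 1) ≤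
      homDensity (K11 t) (compl' W))
    (hK3 : 1 / 4 ≤ homDensity (⊤ : SimpleGraph (Fin 3)) W +
      homDensity (⊤ : SimpleGraph (Fin 3)) (compl' W)) :
    (2 : ℝ) ^ (-(2 * t : ℤ)) ≤ homDensity (K11 t) W + homDensity (K11 t) (compl' W) := by
  calc (2 : ℝ) ^ (-(2 * t : ℤ)) = (1 / 4) ^ t := by
        rw [zpow_neg, zpow_mul, zpow_natCast, one_div, inv_pow]
        norm_num
    _ ≤ (homDensity (⊤ : SimpleGraph (Fin 3)) W
          + homDensity (⊤ : SimpleGraph (Fin 3)) (compl' W)) ^ t :=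
      pow_le_pow_left₀ (by norm_num) hK3 t
    _ ≤ _ := pow_add_le_pow_div_add_pow_div (homDensity_nonneg hW _)
      (homDensity_nonneg hW.compl' _) (homDensity_top_fin_three_le hW)
      (homDensity_top_fin_three_le hW.compl') (homDensity_top_fin_two_add_compl' hW) t
    _ ≤ _ := add_le_add h1 h2

/-- `K_{1,1,t}` is common: assuming the Cauchy–Schwarz-type inequalities
`t_{K_{1,1,t}}(W) ≥ t_{K₃}(W)^t / t_{K₂}(W)^{t-1}` (and the same for `1-W`) and
`m_{K₃}(W) ≥ 1/4`, we get `m_{K_{1,1,t}}(W) ≥ 2^{1-e(K_{1,1,t})} = 2^{-2t}`. -/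
theorem K11t_common (t : ℕ) (ht : 1 ≤ t)
    (W : unitInterval → unitInterval → ℝ) (hW : IsGraphon W)
    (h1 : homDensity (⊤ : SimpleGraph (Fin 3)) W ^ t /
        homDensity (⊤ : SimpleGraph (Fin 2)) W ^ (t - 1) ≤ homDensity (K11 t) W)
    (h2 : homDensity (⊤ : SimpleGraph (Fin 3)) (compl' W) ^ t /
        homDensity (⊤ : SimpleGraph (Fin 2)) (compl' W) ^ (t - 1) ≤
      homDensity (K11 t) (compl' W))
    (hK3 : 1 / 4 ≤ homDensity (⊤ : SimpleGraph (Fin 3)) W +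
      homDensity (⊤ : SimpleGraph (Fin 3)) (compl' W)) :
    (2 : ℝ) ^ (-(2 * t : ℤ)) ≤ homDensity (K11 t) W + homDensity (K11 t) (compl' W) :=
  K11t_common_general t W hW h1 h2 hK3
end
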